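/- arXiv:2511.16401 — 3 statements merged into one kernel-verified Lean document; each statement's English description precedes it below -/
import Mathlib

section
/- Let I ⊆ ℝ be an open interval and let H : I → M_N(ℂ) be a smooth path of positive definite Hermitian N×N matrices which is negatively curved, i.e. the Hermitian matrix H''(t) − H'(t) H(t)⁻¹ H'(t) is positive semidefinite for every t ∈ I. Then for every nonzero s ∈ ℂ^N the function t ↦ log(s* H(t) s) is convex on I. -/
open scoped ComplexOrder

open Matrix

private lemma quad_hasDerivAt {N : ℕ} (M M' : ℝ → Matrix (Fin N) (Fin N) ℂ)
    (s : Fin N → ℂ) (t : ℝ)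
    (h : ∀ i j, HasDerivAt (fun u => M u i j) (M' t i j) t) :
    HasDerivAt (fun u => (dotProduct (star s) ((M u).mulVec s)).re)
      ((dotProduct (star s) ((M' t).mulVec s)).re) t := by
  have hF : HasDerivAt (fun u => dotProduct (star s) ((M u).mulVec s))
      (dotProduct (star s) ((M' t).mulVec s)) t := by
    simp only [dotProduct, Matrix.mulVec]
    exact HasDerivAt.fun_sum fun i _ =>
      HasDerivAt.const_mul _ (HasDerivAt.fun_sum fun j _ => (h i j).mul_const _)
  exact Complex.reCLM.hasFDerivAt.comp_hasDerivAt t hF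

private lemma cs_ineq {N : ℕ} {M : Matrix (Fin N) (Fin N) ℂ} (hM : M.PosDef)
    (x y : Fin N → ℂ) :
    ‖dotProduct (star x) (M.mulVec y)‖ ^ 2
      ≤ (dotProduct (star x) (M.mulVec x)).re
        * (dotProduct (star y) (M.mulVec y)).re := by
  letI c : PreInnerProductSpace.Core ℂ (Fin N → ℂ) :=
    { inner := fun v w => dotProduct (star v) (M.mulVec w)
      conj_inner_symm := fun v w => by
        rw [star_dotProduct, starRingEnd_apply, star_star, star_mulVec, dotProduct_mulVec,
          hM.isHermitian.eq]
      re_inner_nonneg := fun v => hM.posSemidef.re_dotProduct_nonneg v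
      add_left := by simp only [star_add, add_dotProduct, forall_const, implies_true]
      smul_left := fun v w r => by
        rw [← smul_eq_mul, ← smul_dotProduct, starRingEnd_apply, ← star_smul] }
  have h := @InnerProductSpace.Core.inner_mul_inner_self_le ℂ (Fin N → ℂ) _ _ _ c x y
  have h' : ‖dotProduct (star x) (M.mulVec y)‖
        * ‖dotProduct (star y) (M.mulVec x)‖
      ≤ (dotProduct (star x) (M.mulVec x)).re
        * (dotProduct (star y) (M.mulVec y)).re := h
  have key : (starRingEnd ℂ) (dotProduct (star y) (M.mulVec x))
      = dotProduct (star x) (M.mulVec y) := by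
    rw [star_dotProduct, starRingEnd_apply, star_star, star_mulVec, dotProduct_mulVec,
      hM.isHermitian.eq]
  have hnorm : ‖dotProduct (star y) (M.mulVec x)‖
      = ‖dotProduct (star x) (M.mulVec y)‖ := by
    rw [← key, RCLike.norm_conj]
  rw [sq]
  calc ‖dotProduct (star x) (M.mulVec y)‖ * ‖dotProduct (star x) (M.mulVec y)‖
      = ‖dotProduct (star x) (M.mulVec y)‖
        * ‖dotProduct (star y) (M.mulVec x)‖ := by rw [hnorm]
    _ ≤ _ := h'

private lemma vecMul_dot_mulVec {N : ℕ} (u v : Fin N → ℂ)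
    (A C : Matrix (Fin N) (Fin N) ℂ) :
    dotProduct (Matrix.vecMul u A) (C.mulVec v)
      = dotProduct u ((A * C).mulVec v) := by
  rw [Matrix.dotProduct_mulVec, Matrix.dotProduct_mulVec, Matrix.vecMul_vecMul]

/-- Let `I = (a,b) ⊆ ℝ` be an open interval and `H : I → M_N(ℂ)` a smooth
path of positive definite Hermitian matrices (with entrywise derivatives `H'`, `H''` on `I`)
which is negatively curved, i.e. `H''(t) - H'(t) H(t)⁻¹ H'(t)` is positive semidefinite for
every `t ∈ I`.  Then for every nonzero `s ∈ ℂ^N` the function `t ↦ log (s* H(t) s)` is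
convex on `I`. -/
theorem statement0 (N : ℕ) (a b : ℝ)
    (H H' H'' : ℝ → Matrix (Fin N) (Fin N) ℂ)
    (hsmooth : ∀ i j, ContDiffOn ℝ (⊤ : ℕ∞) (fun u => H u i j) (Set.Ioo a b))
    (hpos : ∀ t ∈ Set.Ioo a b, (H t).PosDef)
    (hd1 : ∀ t ∈ Set.Ioo a b, ∀ i j, HasDerivAt (fun u => H u i j) (H' t i j) t)
    (hd2 : ∀ t ∈ Set.Ioo a b, ∀ i j, HasDerivAt (fun u => H' u i j) (H'' t i j) t)
    (hcurv : ∀ t ∈ Set.Ioo a b, (H'' t - H' t * (H t)⁻¹ * H' t).PosSemidef)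
    (s : Fin N → ℂ) (hs : s ≠ 0) :
    ConvexOn ℝ (Set.Ioo a b)
      (fun t => Real.log ((dotProduct (star s) ((H t).mulVec s)).re)) := by
  set D := Set.Ioo a b with hD
  set f : ℝ → ℝ := fun t => (dotProduct (star s) ((H t).mulVec s)).re with hf
  set f1 : ℝ → ℝ := fun t => (dotProduct (star s) ((H' t).mulVec s)).re with hf1
  set f2 : ℝ → ℝ := fun t => (dotProduct (star s) ((H'' t).mulVec s)).re with hf2
  have hopen : IsOpen D := isOpen_Ioo
  have hfpos : ∀ t ∈ D, 0 < f t := fun t ht => (hpos t ht).re_dotProduct_pos hs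
  have hdf : ∀ t ∈ D, HasDerivAt f (f1 t) t := fun t ht =>
    quad_hasDerivAt H H' s t (hd1 t ht)
  have hdf1 : ∀ t ∈ D, HasDerivAt f1 (f2 t) t := fun t ht =>
    quad_hasDerivAt H' H'' s t (hd2 t ht)
  -- H' t is Hermitian on D
  have hH'herm : ∀ t ∈ D, (H' t)ᴴ = H' t := by
    intro t ht
    ext i j
    have h1 : HasDerivAt (fun u => H u i j) (H' t i j) t := hd1 t ht i j
    have h2 : HasDerivAt (fun u => (starRingEnd ℂ) (H u j i))
        ((starRingEnd ℂ) (H' t j i)) t := by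
      have := hd1 t ht j i
      exact (Complex.conjCLE : ℂ ≃L[ℝ] ℂ).toContinuousLinearMap.hasFDerivAt.comp_hasDerivAt t this
    have heq : (fun u => H u i j) =ᶠ[nhds t] (fun u => (starRingEnd ℂ) (H u j i)) := by
      filter_upwards [hopen.mem_nhds ht] with u hu
      have := (hpos u hu).isHermitian.apply i j
      rw [← this, starRingEnd_apply]
    have h2' : HasDerivAt (fun u => H u i j) ((starRingEnd ℂ) (H' t j i)) t :=
      h2.congr_of_eventuallyEq heq
    have := h1.unique h2'
    simp [Matrix.conjTranspose_apply, ← this, starRingEnd_apply]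
  -- key inequality
  have hkey : ∀ t ∈ D, f1 t * f1 t ≤ f2 t * f t := by
    intro t ht
    have hA := hpos t ht
    have hAinv : ((H t)⁻¹).PosDef := hA.inv
    have hunit : IsUnit (H t).det := hA.det_pos.ne'.isUnit
    have hAH : (H t) * (H t)⁻¹ = 1 := Matrix.mul_nonsing_inv _ hunit
    have hHA : (H t)⁻¹ * (H t) = 1 := Matrix.nonsing_inv_mul _ hunit
    have hherm : (H t)ᴴ = H t := hA.isHermitian
    have hBh : (H' t)ᴴ = H' t := hH'herm t ht
    have e1 : dotProduct (star ((H t).mulVec s)) (((H t)⁻¹).mulVec ((H' t).mulVec s))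
        = dotProduct (star s) ((H' t).mulVec s) := by
      rw [star_mulVec, Matrix.mulVec_mulVec, vecMul_dot_mulVec, hherm, ← Matrix.mul_assoc,
        hAH, Matrix.one_mul]
    have e2 : dotProduct (star ((H t).mulVec s)) (((H t)⁻¹).mulVec ((H t).mulVec s))
        = dotProduct (star s) ((H t).mulVec s) := by
      rw [star_mulVec, Matrix.mulVec_mulVec, vecMul_dot_mulVec, hherm, ← Matrix.mul_assoc,
        hAH, Matrix.one_mul]
    have e3 : dotProduct (star ((H' t).mulVec s)) (((H t)⁻¹).mulVec ((H' t).mulVec s))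
        = dotProduct (star s) ((H' t * (H t)⁻¹ * H' t).mulVec s) := by
      rw [star_mulVec, Matrix.mulVec_mulVec, vecMul_dot_mulVec, hBh, ← Matrix.mul_assoc]
    have hcs := cs_ineq hAinv ((H t).mulVec s) ((H' t).mulVec s)
    rw [e1, e2, e3] at hcs
    -- curvature bound
    have hc := (hcurv t ht).re_dotProduct_nonneg s
    rw [Matrix.sub_mulVec, dotProduct_sub, map_sub] at hc
    simp only [RCLike.re_to_complex] at hc
    have hcurv' : (dotProduct (star s) ((H' t * (H t)⁻¹ * H' t).mulVec s)).re ≤ f2 t := by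
      simp only [hf2]
      linarith
    have hre : f1 t * f1 t ≤ ‖dotProduct (star s) ((H' t).mulVec s)‖ ^ 2 := by
      have := Complex.sq_norm (dotProduct (star s) ((H' t).mulVec s))
      rw [Complex.normSq_apply] at this
      rw [this]
      nlinarith [sq_nonneg (dotProduct (star s) ((H' t).mulVec s)).im]
    have hfnn : 0 ≤ f t := (hfpos t ht).le
    nlinarith [hcs, hcurv', hre, hfnn,
      mul_le_mul_of_nonneg_left hcurv' hfnn]
  -- assemble convexity
  have hint : interior D = D := hopen.interior_eq
  have hlog : ∀ t ∈ D, HasDerivAt (fun u => Real.log (f u)) (f1 t / f t) t := fun t ht =>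
    (hdf t ht).log (hfpos t ht).ne'
  refine convexOn_of_hasDerivWithinAt2_nonneg (convex_Ioo a b)
    (f' := fun t => f1 t / f t)
    (f'' := fun t => (f2 t * f t - f1 t * f1 t) / f t ^ 2)
    ?_ ?_ ?_ ?_
  · intro x hx
    exact (hlog x hx).continuousAt.continuousWithinAt
  · intro x hx
    rw [hint] at hx ⊢
    exact (hlog x hx).hasDerivWithinAt
  · intro x hx
    rw [hint] at hx ⊢
    exact (((hdf1 x hx).div (hdf x hx) (hfpos x hx).ne')).hasDerivWithinAt
  · intro x hx
    rw [hint] at hx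
    have := hkey x hx
    have h2 : (0:ℝ) ≤ f x ^ 2 := sq_nonneg _
    apply div_nonneg _ h2
    linarith
end

section
/- Let V be a finite-dimensional complex inner product space and A a self-adjoint endomorphism of V. For every nonzero v ∈ V, the limit −lim_{t→∞} (1/t) · log ⟨exp(−tA) v, v⟩ exists and equals the minimum of those eigenvalues μ of A for which the orthogonal projection of v onto the eigenspace ker(A − μ·id) is nonzero. -/
/-!
Expand `v = ∑ cᵢ eᵢ` in an orthonormal eigenbasis of `A`, `A eᵢ = λᵢ eᵢ`. Then
`re ⟪exp(-tA) v, v⟫ = ∑ |cᵢ|² e^{-t λᵢ}`, and the projection of `v` onto `ker (A - μ)` is nonzero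
exactly when `cᵢ ≠ 0` for some `i` with `λᵢ = μ`. If `μ₀` is the least such eigenvalue, then for
`t ≥ 0` the sum lies between `|cᵢ₀|² e^{-t μ₀}` and `(∑ |cᵢ|²) e^{-t μ₀}`, and `-(1/t) log` of
either bound tends to `μ₀`.
-/

open Filter Topology NormedSpace Module.End

theorem ContinuousLinearMap.exp_apply_of_apply_eq_smul {𝕂 E : Type*} [RCLike 𝕂]
    [NormedAddCommGroup E] [NormedSpace 𝕂 E] [CompleteSpace E]
    {B : E →L[𝕂] E} {z : 𝕂} {x : E} (h : B x = z • x) : exp B x = exp z • x := by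
  have hpow (n : ℕ) : (B ^ n) x = z ^ n • x := by
    induction n with
    | zero => simp
    | succ n ih => rw [pow_succ, mul_apply_eq_comp, h, map_smul, ih, smul_smul, pow_succ']
  refine ((exp_series_hasSum_exp' (𝕂 := 𝕂) B).mapL (apply 𝕂 E x)).unique ?_
  simpa [hpow, smul_smul] using (exp_series_hasSum_exp' (𝕂 := 𝕂) z).smul_const x

namespace LinearMap.IsSymmetric

variable {𝕜 E : Type*} [RCLike 𝕜] [NormedAddCommGroup E] [InnerProductSpace 𝕜 E]
  [FiniteDimensional 𝕜 E] {n : ℕ} (hn : Module.finrank 𝕜 E = n)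

theorem starProjection_eigenspace_eigenvectorBasis {T : E →ₗ[𝕜] E} (hT : T.IsSymmetric)
    (μ : ℝ) (i : Fin n) :
    (eigenspace T μ).starProjection (hT.eigenvectorBasis hn i) =
      if hT.eigenvalues hn i = μ then hT.eigenvectorBasis hn i else 0 := by
  have hmem := (hT.hasEigenvector_eigenvectorBasis hn i).1
  split_ifs with hμ
  · rw [Submodule.starProjection_eq_self_iff, ← hμ]
    exact hmem
  · rw [Submodule.starProjection_apply_eq_zero_iff]
    intro w hw
    exact hT.orthogonalFamily_eigenspaces (by exact_mod_cast Ne.symm hμ) ⟨w, hw⟩ ⟨_, hmem⟩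

theorem orthogonalProjectionOnto_eigenspace_ne_zero_iff {T : E →ₗ[𝕜] E} (hT : T.IsSymmetric)
    (μ : ℝ) (v : E) :
    (eigenspace T μ).orthogonalProjectionOnto v ≠ 0 ↔
      ∃ i, inner 𝕜 (hT.eigenvectorBasis hn i) v ≠ 0 ∧ hT.eigenvalues hn i = μ := by
  set e := hT.eigenvectorBasis hn
  have hinner (i : Fin n) : inner 𝕜 (e i) ((eigenspace T μ).starProjection v) =
      if hT.eigenvalues hn i = μ then inner 𝕜 (e i) v else 0 := by
    rw [← Submodule.inner_starProjection_left_eq_right,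
      starProjection_eigenspace_eigenvectorBasis hn hT, apply_ite (inner 𝕜 · v), inner_zero_left]
  have hzero (x : E) : x = 0 ↔ ∀ i, inner 𝕜 (e i) x = 0 :=
    ⟨fun h i ↦ by simp [h], fun h ↦ by rw [← e.sum_repr' x]; simp [h]⟩
  rw [Ne, ← ZeroMemClass.coe_eq_zero, ← Submodule.starProjection_apply, hzero]
  simp [hinner, and_comm]

theorem re_inner_exp_smul_apply_self {T : E →L[𝕜] E} (hT : (T : E →ₗ[𝕜] E).IsSymmetric)
    (r : ℝ) (v : E) :
    RCLike.re (inner 𝕜 (exp ((r : 𝕜) • T) v) v) =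
      ∑ i, ‖inner 𝕜 (hT.eigenvectorBasis hn i) v‖ ^ 2 * Real.exp (r * hT.eigenvalues hn i) := by
  have := FiniteDimensional.complete 𝕜 E
  set e := hT.eigenvectorBasis hn
  have hexp (i : Fin n) :
      exp ((r : 𝕜) • T) (e i) = (Real.exp (r * hT.eigenvalues hn i) : 𝕜) • e i := by
    have hsmul : ((r : 𝕜) • T) (e i) = ((r * hT.eigenvalues hn i : ℝ) : 𝕜) • e i := by
      rw [_root_.smul_apply, ← ContinuousLinearMap.coe_coe, hT.apply_eigenvectorBasis,
        smul_smul, RCLike.ofReal_mul]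
    rw [ContinuousLinearMap.exp_apply_of_apply_eq_smul hsmul, Real.exp_eq_exp_ℝ,
      ← RCLike.algebraMap_eq_ofReal, map_exp (algebraMap ℝ 𝕜) (continuous_algebraMap ℝ 𝕜)]
  nth_rw 1 [← e.sum_repr' v]
  rw [map_sum, sum_inner, map_sum]
  refine Finset.sum_congr rfl fun i _ ↦ ?_
  rw [map_smul, hexp, smul_smul, inner_smul_left, map_mul (starRingEnd 𝕜), RCLike.conj_ofReal,
    mul_right_comm, RCLike.conj_mul, ← RCLike.ofReal_pow, ← RCLike.ofReal_mul, RCLike.ofReal_re]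

end LinearMap.IsSymmetric

theorem tendsto_neg_inv_mul_log_mul_exp {c : ℝ} (hc : 0 < c) (μ : ℝ) :
    Tendsto (fun t ↦ -((1 / t) * Real.log (c * Real.exp (-t * μ)))) atTop (𝓝 μ) := by
  have hlim : Tendsto (fun t : ℝ ↦ μ - Real.log c / t) atTop (𝓝 μ) := by
    simpa using
      tendsto_const_nhds.sub ((tendsto_const_nhds (x := Real.log c)).div_atTop tendsto_id)
  refine hlim.congr' ?_
  filter_upwards [eventually_ne_atTop 0] with t ht
  rw [Real.log_mul hc.ne' (Real.exp_pos _).ne', Real.log_exp]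
  field_simp
  ring

theorem tendsto_neg_inv_mul_log_sum_mul_exp {ι : Type*} [Fintype ι] {w lam : ι → ℝ} {μ₀ : ℝ}
    (hw : ∀ i, 0 ≤ w i) (hμ₀ : IsLeast (lam '' {i | w i ≠ 0}) μ₀) :
    Tendsto (fun t ↦ -((1 / t) * Real.log (∑ i, w i * Real.exp (-t * lam i)))) atTop (𝓝 μ₀) := by
  obtain ⟨⟨i₀, hi₀, rfl⟩, hle⟩ := hμ₀
  have hwi₀ : 0 < w i₀ := (hw i₀).lt_of_ne' hi₀
  have hW : 0 < ∑ i, w i :=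
    hwi₀.trans_le (Finset.single_le_sum (fun i _ ↦ hw i) (Finset.mem_univ i₀))
  have hlower (t : ℝ) : w i₀ * Real.exp (-t * lam i₀) ≤ ∑ i, w i * Real.exp (-t * lam i) :=
    Finset.single_le_sum (f := fun i ↦ w i * Real.exp (-t * lam i))
      (fun i _ ↦ mul_nonneg (hw i) (Real.exp_pos _).le) (Finset.mem_univ i₀)
  have hupper (t : ℝ) (ht : 0 ≤ t) :
      ∑ i, w i * Real.exp (-t * lam i) ≤ (∑ i, w i) * Real.exp (-t * lam i₀) := by
    rw [Finset.sum_mul]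
    refine Finset.sum_le_sum fun i _ ↦ ?_
    rcases eq_or_ne (w i) 0 with hi | hi
    · simp [hi]
    · have := hle ⟨i, hi, rfl⟩
      exact mul_le_mul_of_nonneg_left (Real.exp_le_exp.2 (by nlinarith)) (hw i)
  have hpos (t : ℝ) : 0 < ∑ i, w i * Real.exp (-t * lam i) :=
    (mul_pos hwi₀ (Real.exp_pos _)).trans_le (hlower t)
  refine tendsto_of_tendsto_of_tendsto_of_le_of_le' (tendsto_neg_inv_mul_log_mul_exp hW _)
    (tendsto_neg_inv_mul_log_mul_exp hwi₀ _) ?_ ?_ <;>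
    filter_upwards [eventually_gt_atTop 0] with t ht
  · gcongr
    exacts [hpos t, hupper t ht.le]
  · gcongr
    exact hlower t

/-- Let `V` be a finite-dimensional complex inner product space and `A`
a self-adjoint endomorphism of `V`.  For every nonzero `v ∈ V` the limit
`-lim_{t→∞} (1/t) log ⟨exp(-tA) v, v⟩` exists and equals the minimum of those eigenvalues
`μ` of `A` for which the orthogonal projection of `v` onto `ker (A - μ·id)` is nonzero. -/
theorem statement3 {V : Type*} [NormedAddCommGroup V] [InnerProductSpace ℂ V]
    [FiniteDimensional ℂ V]
    (A : V →L[ℂ] V) (hA : ∀ x y : V, (inner ℂ (A x) y : ℂ) = inner ℂ x (A y))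
    (v : V) (hv : v ≠ 0) :
    ∃ μ₀ : ℝ,
      IsLeast {μ : ℝ |
        Submodule.orthogonalProjectionOnto (Module.End.eigenspace (A : V →ₗ[ℂ] V) (μ : ℂ)) v ≠ 0} μ₀ ∧
      Filter.Tendsto
        (fun t : ℝ =>
          -((1 / t) *
            Real.log ((inner ℂ ((NormedSpace.exp ((-(t : ℂ)) • A)) v) v : ℂ).re)))
        Filter.atTop (nhds μ₀) := by
  have hT : (A : V →ₗ[ℂ] V).IsSymmetric := hA
  set e := hT.eigenvectorBasis rfl
  set lam := hT.eigenvalues rfl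
  have hset : {μ : ℝ | (eigenspace (A : V →ₗ[ℂ] V) (μ : ℂ)).orthogonalProjectionOnto v ≠ 0} =
      lam '' {i | inner ℂ (e i) v ≠ 0} :=
    Set.ext fun μ ↦ hT.orthogonalProjectionOnto_eigenspace_ne_zero_iff rfl μ v
  obtain ⟨i, hi⟩ : ∃ i, inner ℂ (e i) v ≠ 0 := by
    contrapose! hv
    rw [← e.sum_repr' v]
    simp [hv]
  obtain ⟨μ₀, hμ₀⟩ : ∃ μ₀, IsLeast (lam '' {i | inner ℂ (e i) v ≠ 0}) μ₀ :=
    (Set.toFinite _).isCompact.exists_isLeast ⟨lam i, i, hi, rfl⟩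
  refine ⟨μ₀, hset ▸ hμ₀, ?_⟩
  have hexpand (t : ℝ) : (inner ℂ (exp (-(t : ℂ) • A) v) v).re =
      ∑ i, ‖inner ℂ (e i) v‖ ^ 2 * Real.exp (-t * lam i) := by
    simpa using hT.re_inner_exp_smul_apply_self rfl (-t) v
  simpa only [hexpand] using
    tendsto_neg_inv_mul_log_sum_mul_exp (fun i ↦ sq_nonneg _) (by simpa using hμ₀)
end

section
/- Let χ be a non-Archimedean norm on a finite-dimensional complex inner product space V. For λ ∈ ℝ let F^λ = {v ∈ V : χ(v) ≥ λ} and F^{>λ} = {v ∈ V : χ(v) > λ} (both contain 0 since χ(0) = +∞). Then each F^λ and F^{>λ} is a ℂ-linear subspace of V; setting E^λ := F^λ ∩ (F^{>λ})^⊥ (the orthogonal complement of F^{>λ} inside F^λ), the subspace E^λ is nonzero exactly when λ is a value of χ on V ∖ {0}, only finitely many E^λ are nonzero, and V is the internal direct sum of the family (E^λ)_{λ ∈ ℝ}. -/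
/-- A non-Archimedean norm on a complex vector space `V` (with `ℂ` carrying the trivial
absolute value), with values in `ℝ ∪ {±∞}`: `χ(v) = +∞` iff `v = 0` (and `χ` never takes
the value `-∞`), `χ(a • v) = χ(v)` for `a ≠ 0`, and `χ(v + w) ≥ min (χ(v), χ(w))`. -/
def IsNonArchNorm {V : Type*} [AddCommGroup V] [Module ℂ V] (χ : V → EReal) : Prop :=
  (∀ v : V, χ v ≠ ⊥) ∧ (∀ v : V, χ v = ⊤ ↔ v = 0) ∧
    (∀ a : ℂ, a ≠ 0 → ∀ v : V, χ (a • v) = χ v) ∧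
    (∀ v w : V, min (χ v) (χ w) ≤ χ (v + w))

section Aux
variable {V : Type*} [AddCommGroup V] [Module ℂ V] {χ : V → EReal}

lemma naChiZero (hχ : IsNonArchNorm χ) : χ (0 : V) = ⊤ := (hχ.2.1 0).mpr rfl

lemma naChiNeg (hχ : IsNonArchNorm χ) (v : V) : χ (-v) = χ v := by
  simpa using hχ.2.2.1 (-1) (by norm_num) v

def naFge (hχ : IsNonArchNorm χ) (lam : ℝ) : Submodule ℂ V where
  carrier := {v | (lam : EReal) ≤ χ v}
  zero_mem' := by simp [Set.mem_setOf_eq, naChiZero hχ]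
  add_mem' := fun {a b} ha hb => le_trans (le_min ha hb) (hχ.2.2.2 a b)
  smul_mem' := fun c v hv => by
    rcases eq_or_ne c 0 with rfl | hc
    · simp [Set.mem_setOf_eq, naChiZero hχ]
    · simpa [Set.mem_setOf_eq, hχ.2.2.1 c hc v] using hv

def naFgt (hχ : IsNonArchNorm χ) (lam : ℝ) : Submodule ℂ V where
  carrier := {v | (lam : EReal) < χ v}
  zero_mem' := by simp [Set.mem_setOf_eq, naChiZero hχ]
  add_mem' := fun {a b} ha hb => lt_of_lt_of_le (lt_min ha hb) (hχ.2.2.2 a b)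
  smul_mem' := fun c v hv => by
    rcases eq_or_ne c 0 with rfl | hc
    · simp [Set.mem_setOf_eq, naChiZero hχ]
    · simpa [Set.mem_setOf_eq, hχ.2.2.1 c hc v] using hv

@[simp] lemma mem_naFge {hχ : IsNonArchNorm χ} {lam : ℝ} {v : V} :
    v ∈ naFge hχ lam ↔ (lam : EReal) ≤ χ v := Iff.rfl

@[simp] lemma mem_naFgt {hχ : IsNonArchNorm χ} {lam : ℝ} {v : V} :
    v ∈ naFgt hχ lam ↔ (lam : EReal) < χ v := Iff.rfl

lemma naAddLeft (hχ : IsNonArchNorm χ) {u w : V} (h : χ u < χ w) : χ (u + w) = χ u := by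
  refine le_antisymm ?_ ((min_eq_left h.le) ▸ hχ.2.2.2 u w)
  by_contra hA
  have h1 : min (χ (u + w)) (χ w) ≤ χ u := by
    have := hχ.2.2.2 (u + w) (-w)
    simpa [naChiNeg hχ] using this
  exact (lt_min (not_le.mp hA) h).not_ge h1

lemma naAddNe (hχ : IsNonArchNorm χ) {u w : V} (h : χ u ≠ χ w) :
    χ (u + w) = min (χ u) (χ w) := by
  rcases h.lt_or_gt with h' | h'
  · rw [min_eq_left h'.le]; exact naAddLeft hχ h'
  · rw [min_eq_right h'.le, add_comm]; exact naAddLeft hχ h'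

lemma naSum (hχ : IsNonArchNorm χ) {ι : Type*} (s : Finset ι) (w : ι → V) (lamf : ι → ℝ)
    (hinj : Set.InjOn lamf s)
    (hw : ∀ i ∈ s, w i ≠ 0 → χ (w i) = (lamf i : EReal))
    (hne : ∃ i ∈ s, w i ≠ 0) :
    ∃ i ∈ s, w i ≠ 0 ∧ χ (∑ j ∈ s, w j) = (lamf i : EReal) := by
  classical
  induction s using Finset.induction_on with
  | empty => simp at hne
  | @insert a s ha ih =>
    have hinj' : Set.InjOn lamf s := hinj.mono (by exact_mod_cast Finset.subset_insert a s)
    have hw' : ∀ i ∈ s, w i ≠ 0 → χ (w i) = (lamf i : EReal) :=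
      fun i hi => hw i (Finset.mem_insert_of_mem hi)
    rw [Finset.sum_insert ha]
    by_cases hwa : w a = 0
    · obtain ⟨i, hi, hwi⟩ := hne
      rcases Finset.mem_insert.mp hi with rfl | hi'
      · exact absurd hwa hwi
      · obtain ⟨j, hj, h1, h2⟩ := ih hinj' hw' ⟨i, hi', hwi⟩
        exact ⟨j, Finset.mem_insert_of_mem hj, h1, by rwa [hwa, zero_add]⟩
    · by_cases hs : ∃ i ∈ s, w i ≠ 0
      · obtain ⟨i, hi, h1, h2⟩ := ih hinj' hw' hs
        have hane : lamf a ≠ lamf i := fun h =>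
          ha (by
            have : a = i := hinj (Finset.mem_insert_self a s)
              (Finset.mem_insert_of_mem hi) h
            rwa [this])
        have hneq : χ (w a) ≠ χ (∑ j ∈ s, w j) := by
          rw [hw a (Finset.mem_insert_self a s) hwa, h2]
          exact_mod_cast hane
        rw [naAddNe hχ hneq, hw a (Finset.mem_insert_self a s) hwa, h2]
        rcases le_total (lamf a) (lamf i) with hle | hle
        · exact ⟨a, Finset.mem_insert_self a s, hwa, by
            rw [min_eq_left]; exact_mod_cast hle⟩
        · exact ⟨i, Finset.mem_insert_of_mem hi, h1, by
            rw [min_eq_right]; exact_mod_cast hle⟩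
      · push_neg at hs
        have : ∑ j ∈ s, w j = 0 := Finset.sum_eq_zero hs
        rw [this, add_zero]
        exact ⟨a, Finset.mem_insert_self a s, hwa,
          hw a (Finset.mem_insert_self a s) hwa⟩

end Aux

/-- Let `χ` be a non-Archimedean norm on a finite-dimensional complex
inner product space `V`.  For `λ ∈ ℝ` the sets `F^λ = {v : χ(v) ≥ λ}` and
`F^{>λ} = {v : χ(v) > λ}` are `ℂ`-linear subspaces of `V`; setting
`E^λ := F^λ ⊓ (F^{>λ})ᗮ`, the subspace `E^λ` is nonzero exactly when `λ` is a value of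
`χ` on `V \ {0}`, only finitely many `E^λ` are nonzero, and `V` is the internal direct
sum of the family `(E^λ)_{λ ∈ ℝ}`. -/
theorem statement8 {V : Type*} [NormedAddCommGroup V] [InnerProductSpace ℂ V]
    [FiniteDimensional ℂ V]
    (χ : V → EReal) (hχ : IsNonArchNorm χ) :
    ∃ F Fgt : ℝ → Submodule ℂ V,
      (∀ lam : ℝ, (F lam : Set V) = {v : V | (lam : EReal) ≤ χ v}) ∧
      (∀ lam : ℝ, (Fgt lam : Set V) = {v : V | (lam : EReal) < χ v}) ∧
      (∀ lam : ℝ, F lam ⊓ (Fgt lam)ᗮ ≠ ⊥ ↔ ∃ v : V, v ≠ 0 ∧ χ v = (lam : EReal)) ∧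
      {lam : ℝ | F lam ⊓ (Fgt lam)ᗮ ≠ ⊥}.Finite ∧
      DirectSum.IsInternal (fun lam : ℝ => F lam ⊓ (Fgt lam)ᗮ) := by
  classical
  have hEchi : ∀ (lam : ℝ) (v : V), v ∈ naFge hχ lam ⊓ (naFgt hχ lam)ᗮ → v ≠ 0 →
      χ v = (lam : EReal) := by
    intro lam v hv hv0
    obtain ⟨hv1, hv2⟩ := Submodule.mem_inf.mp hv
    refine le_antisymm ?_ hv1
    by_contra h
    push_neg at h
    have hvgt : v ∈ naFgt hχ lam := mem_naFgt.mpr h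
    have := (Submodule.mem_orthogonal _ v).mp hv2 v hvgt
    exact hv0 (inner_self_eq_zero.mp this)
  have hle : ∀ lam : ℝ, naFgt hχ lam ≤ naFge hχ lam := fun lam v hv => mem_naFge.mpr (le_of_lt (mem_naFgt.mp hv))
  have hsup : ∀ lam : ℝ,
      naFgt hχ lam ⊔ ((naFgt hχ lam)ᗮ ⊓ naFge hχ lam) = naFge hχ lam :=
    fun lam => Submodule.sup_orthogonal_inf_of_hasOrthogonalProjection (hle lam)
  have hiff : ∀ lam : ℝ, naFge hχ lam ⊓ (naFgt hχ lam)ᗮ ≠ ⊥ ↔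
      ∃ v : V, v ≠ 0 ∧ χ v = (lam : EReal) := by
    intro lam
    constructor
    · intro h
      obtain ⟨v, hv, hv0⟩ := Submodule.exists_mem_ne_zero_of_ne_bot h
      exact ⟨v, hv0, hEchi lam v hv hv0⟩
    · rintro ⟨v, hv0, hveq⟩ hbot
      have h2 : naFgt hχ lam = naFge hχ lam := by
        have h3 := hsup lam
        rwa [inf_comm ((naFgt hχ lam)ᗮ) (naFge hχ lam), hbot, sup_bot_eq] at h3
      have hvF : v ∈ naFge hχ lam := mem_naFge.mpr hveq.ge
      rw [← h2] at hvF
      exact absurd (mem_naFgt.mp hvF) (by rw [hveq]; exact lt_irrefl _)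
  have hSfin : {lam : ℝ | ∃ v : V, v ≠ 0 ∧ χ v = (lam : EReal)}.Finite := by
    set S := {lam : ℝ | ∃ v : V, v ≠ 0 ∧ χ v = (lam : EReal)} with hS
    have hch : ∀ p : S, ∃ v : V, v ≠ 0 ∧ χ v = ((p : ℝ) : EReal) := fun p => p.2
    choose vf hvf0 hvfχ using hch
    have hli : LinearIndependent ℂ vf := by
      rw [linearIndependent_iff']
      intro s g hsum i hi
      by_contra hgi
      have hw : ∀ j ∈ s, g j • vf j ≠ 0 → χ (g j • vf j) = (((j : S) : ℝ) : EReal) := by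
        intro j hj hne
        have hgj : g j ≠ 0 := fun h => hne (by rw [h, zero_smul])
        rw [hχ.2.2.1 (g j) hgj (vf j), hvfχ j]
      obtain ⟨j, hj, hj0, hjχ⟩ := naSum hχ s (fun j => g j • vf j) (fun j => (j : ℝ))
        Subtype.val_injective.injOn hw ⟨i, hi, smul_ne_zero hgi (hvf0 i)⟩
      rw [hsum, naChiZero hχ] at hjχ
      exact (EReal.coe_ne_top _) hjχ.symm
    exact Set.finite_coe_iff.mp hli.finite
  refine ⟨naFge hχ, naFgt hχ, fun lam => rfl, fun lam => rfl, hiff,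
    hSfin.subset (fun lam h => (hiff lam).mp h), ?_⟩
  rw [DirectSum.isInternal_submodule_iff_iSupIndep_and_iSup_eq_top]
  constructor
  · intro lam
    rw [Submodule.disjoint_def]
    intro v hvE hvSup
    by_contra hv0
    have hχv : χ v = (lam : EReal) := hEchi lam v hvE hv0
    rw [iSup_subtype'] at hvSup
    obtain ⟨f, hf, hfsum⟩ := (Submodule.mem_iSup_iff_exists_finsupp _ _).mp hvSup
    rw [Finsupp.sum] at hfsum
    have hex : ∃ i ∈ f.support, f i ≠ 0 := by
      by_contra hno
      push_neg at hno
      have hf0 : f = 0 := by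
        ext i
        by_cases h : i ∈ f.support
        · exact hno i h
        · exact Finsupp.notMem_support_iff.mp h
      rw [hf0] at hfsum
      simp at hfsum
      exact hv0 hfsum.symm
    have hw : ∀ j ∈ f.support, f j ≠ 0 → χ (f j) = (((j : {mu : ℝ // mu ≠ lam}) : ℝ) : EReal) :=
      fun j _ hj0 => hEchi (j : ℝ) (f j) (hf j) hj0
    obtain ⟨j, hj, hj0, hjχ⟩ := naSum hχ f.support (fun i => f i)
      (fun i => (i : ℝ)) Subtype.val_injective.injOn hw hex
    rw [hfsum, hχv] at hjχ
    exact j.2 (by exact_mod_cast hjχ.symm)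
  · rw [eq_top_iff]
    intro v _
    set U : V → Set ℝ :=
      fun u => {mu : ℝ | (∃ x : V, x ≠ 0 ∧ χ x = (mu : EReal)) ∧ χ u < (mu : EReal)} with hU
    have hUfin : ∀ u : V, (U u).Finite := fun u => hSfin.subset (fun mu hmu => hmu.1)
    have key : ∀ n : ℕ, ∀ u : V, (U u).ncard < n →
        u ∈ ⨆ lam : ℝ, (naFge hχ lam ⊓ (naFgt hχ lam)ᗮ) := by
      intro n
      induction n with
      | zero => exact fun u hu => absurd hu (Nat.not_lt_zero _)
      | succ n ih =>
        intro u hu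
        rcases eq_or_ne u 0 with rfl | hu0
        · exact Submodule.zero_mem _
        have hubot := hχ.1 u
        have hutop : χ u ≠ ⊤ := fun h => hu0 ((hχ.2.1 u).mp h)
        set r : ℝ := (χ u).toReal with hrdef
        have hr : ((r : ℝ) : EReal) = χ u := EReal.coe_toReal hutop hubot
        have huF : u ∈ naFge hχ r := mem_naFge.mpr hr.le
        rw [← hsup r] at huF
        obtain ⟨w, hw, e, he, huv⟩ := Submodule.mem_sup.mp huF
        have heE : e ∈ naFge hχ r ⊓ (naFgt hχ r)ᗮ :=
          Submodule.mem_inf.mpr ⟨(Submodule.mem_inf.mp he).2, (Submodule.mem_inf.mp he).1⟩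
        have heSup : e ∈ ⨆ lam : ℝ, (naFge hχ lam ⊓ (naFgt hχ lam)ᗮ) :=
          Submodule.mem_iSup_of_mem r heE
        rcases eq_or_ne w 0 with rfl | hw0
        · rw [zero_add] at huv
          rwa [← huv]
        · have hwbot := hχ.1 w
          have hwtop : χ w ≠ ⊤ := fun h => hw0 ((hχ.2.1 w).mp h)
          set r' : ℝ := (χ w).toReal with hr'def
          have hr' : ((r' : ℝ) : EReal) = χ w := EReal.coe_toReal hwtop hwbot
          have hwgt : (r : EReal) < χ w := mem_naFgt.mp hw
          have hmem : r' ∈ U u := ⟨⟨w, hw0, hr'.symm⟩, by rw [← hr, hr']; exact hwgt⟩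
          have hsub : U w ⊆ (U u) \ {r'} := by
            rintro mu ⟨hmu1, hmu2⟩
            refine ⟨⟨hmu1, ?_⟩, ?_⟩
            · calc χ u = (r : EReal) := hr.symm
                _ < χ w := hwgt
                _ < (mu : EReal) := hmu2
            · intro hmu3
              rw [Set.mem_singleton_iff] at hmu3
              subst hmu3
              rw [hr'] at hmu2
              exact lt_irrefl _ hmu2
          have hcard : (U w).ncard < n := by
            calc (U w).ncard ≤ ((U u) \ {r'}).ncard :=
                  Set.ncard_le_ncard hsub ((hUfin u).diff)
              _ < (U u).ncard := Set.ncard_diff_singleton_lt_of_mem hmem (hUfin u)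
              _ ≤ n := Nat.lt_succ_iff.mp hu
          rw [← huv]
          exact Submodule.add_mem _ (ih w hcard) heSup
    exact key ((U v).ncard + 1) v (Nat.lt_succ_self _)
end
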